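/- Fix d > 0, c > 0 and L_φ ∈ (0,1]. Define V(N) = (L_φ²/N)(exp{N c / d} - 1) for positive integers N. Then V(N+1) > V(N) for all N ≥ 1; i.e., the variance of the averaged Poisson estimator with fixed total computational budget d is strictly increasing in the number N of averaged replicates, so N = 1 is optimal. -/

import Mathlib

open Real

/- With `a = c / d`, the variance is `L² a · g(N a)` for the secant slope `g(x) = (eˣ - 1) / x`
of `exp` at `0`, which is strictly increasing because `exp` is strictly convex. -/

theorem exp_sub_one_div_lt_exp_sub_one_div {x y : ℝ} (hx : x ≠ 0) (hy : y ≠ 0) (hxy : x < y) :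
    (exp x - 1) / x < (exp y - 1) / y := by
  simpa using strictConvexOn_exp.secant_strict_mono (Set.mem_univ 0) (Set.mem_univ x)
    (Set.mem_univ y) hx hy hxy

theorem averaged_poisson_estimator_variance_increasing_general
    (d c L : ℝ) (hd : 0 < d) (hc : 0 < c) (hL0 : 0 < L)
    (N : ℕ) (hN : 1 ≤ N) :
    (L ^ 2 / N) * (Real.exp (N * c / d) - 1)
      < (L ^ 2 / (N + 1)) * (Real.exp ((N + 1) * c / d) - 1) := by
  have hN0 : (0 : ℝ) < N := by exact_mod_cast hN
  have variance_eq_secant (n : ℝ) (hn : 0 < n) :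
      L ^ 2 / n * (exp (n * c / d) - 1)
        = L ^ 2 * (c / d) * ((exp (n * c / d) - 1) / (n * c / d)) := by
    field_simp
  rw [variance_eq_secant N hN0, variance_eq_secant (N + 1) (by positivity)]
  refine mul_lt_mul_of_pos_left (exp_sub_one_div_lt_exp_sub_one_div ?_ ?_ ?_) (by positivity)
  · positivity
  · positivity
  · gcongr
    exact lt_add_one _

/-- For fixed total budget `d > 0`, `c > 0` and `L_φ ∈ (0,1]`, the variance
`V(N) = (L_φ²/N)(exp(N c/d) - 1)` of the averaged Poisson estimator is strictly
increasing in `N`, so `N = 1` is optimal. -/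
theorem averaged_poisson_estimator_variance_increasing
    (d c L : ℝ) (hd : 0 < d) (hc : 0 < c) (hL0 : 0 < L) (hL1 : L ≤ 1)
    (N : ℕ) (hN : 1 ≤ N) :
    (L ^ 2 / N) * (Real.exp (N * c / d) - 1)
      < (L ^ 2 / (N + 1)) * (Real.exp ((N + 1) * c / d) - 1) :=
  averaged_poisson_estimator_variance_increasing_general d c L hd hc hL0 N hN
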